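/- arXiv:2409.03037 — 2 statements merged into one kernel-verified Lean document; each statement's English description precedes it below -/
import Mathlib

section
/- For every integer m ≥ 1: lim_{ρ → 0⁺} ρ^{4−m} e^{2/ρ²} ∫₀^ρ e^{−2/r²} r^{m−7} dr = 1/4. -/
/-!
Differentiating `e^{-b/r²} r^{q+3}` gives `2b e^{-b/r²} r^q + (q+3) e^{-b/r²} r^{q+2}`.
Integrating over `(0, ρ)`, with `I` and `J` the integrals of the two terms, gives
`2b I + (q+3) J = e^{-b/ρ²} ρ^{q+3}`, so the normalized integral `ρ^{-(q+3)} e^{b/ρ²} I` equals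
`(2b + (q+3) J/I)⁻¹`. Since `0 ≤ J ≤ ρ² I`, it tends to `1/(2b)`; for `b = 2`, `q = m - 7` this is
`1/4`. This replaces the asymptotics of the incomplete gamma function by an elementary
integration by parts.
-/

open MeasureTheory Filter Set Topology Function

noncomputable def expNegInvSqMulRpow (b q r : ℝ) : ℝ := Real.exp (-b / r ^ 2) * r ^ q

namespace expNegInvSqMulRpow

variable {b : ℝ} (q : ℝ) {ρ : ℝ}

lemma pos {r : ℝ} (hr : 0 < r) : 0 < expNegInvSqMulRpow b q r :=
  mul_pos (Real.exp_pos _) (Real.rpow_pos_of_pos hr q)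

lemma tendsto_nhdsGT_zero (hb : 0 < b) :
    Tendsto (expNegInvSqMulRpow b q) (𝓝[>] 0) (𝓝 0) := by
  have hinv : Tendsto (fun r : ℝ => r⁻¹) (𝓝[>] 0) (cocompact ℝ) :=
    tendsto_inv_nhdsGT_zero.mono_right atTop_le_cocompact
  refine ((tendsto_rpow_abs_mul_exp_neg_mul_sq_cocompact hb (-q)).comp hinv).congr' ?_
  filter_upwards [self_mem_nhdsWithin] with r (hr : 0 < r)
  rw [comp_apply, abs_of_pos (inv_pos.2 hr), Real.inv_rpow hr.le, Real.rpow_neg hr.le, inv_inv,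
    expNegInvSqMulRpow, inv_pow, ← div_eq_mul_inv, mul_comm]

lemma continuousOn : ContinuousOn (expNegInvSqMulRpow b q) (Ioi 0) := by
  intro r (hr : 0 < r)
  unfold expNegInvSqMulRpow
  exact ((continuousAt_const.div (continuousAt_id.pow 2) (pow_ne_zero 2 hr.ne')).rexp.mul
    (Real.continuousAt_rpow_const r q (Or.inl hr.ne'))).continuousWithinAt

/-- The formula gives `e⁰ · 0 ^ q` at `r = 0`, which is `1` when `q = 0`; the value `0` is the
continuous one. -/
lemma continuousOn_update_zero (hb : 0 < b) :
    ContinuousOn (update (expNegInvSqMulRpow b q) 0 0) (Ici 0) := by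
  intro r (hr : 0 ≤ r)
  rcases hr.eq_or_lt with rfl | hr
  · rw [continuousWithinAt_update_same]
    exact (tendsto_nhdsGT_zero q hb).mono_left
      (nhdsWithin_mono _ fun x hx => lt_of_le_of_ne hx.1 (Ne.symm hx.2))
  · rw [continuousWithinAt_update_of_ne hr.ne']
    exact ((continuousOn q).continuousAt (Ioi_mem_nhds hr)).continuousWithinAt

lemma intervalIntegrable (hb : 0 < b) (hρ : 0 ≤ ρ) :
    IntervalIntegrable (expNegInvSqMulRpow b q) volume 0 ρ := by
  have h := ((continuousOn_update_zero q hb).mono Icc_subset_Ici_self).intervalIntegrable_of_Icc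
    (μ := volume) hρ
  rw [intervalIntegrable_iff_integrableOn_Ioc_of_le hρ] at h ⊢
  exact h.congr_fun (fun r hr => update_of_ne hr.1.ne' _ _) measurableSet_Ioc

lemma hasDerivAt_add_three {r : ℝ} (hr : 0 < r) :
    HasDerivAt (expNegInvSqMulRpow b (q + 3))
      (2 * b * expNegInvSqMulRpow b q r + (q + 3) * expNegInvSqMulRpow b (q + 2) r) r := by
  have hexp : HasDerivAt (fun r : ℝ => Real.exp (-b / r ^ 2))
      (Real.exp (-b / r ^ 2) * (2 * b / r ^ 3)) r := by
    have := ((hasDerivAt_pow 2 r).inv (by positivity)).const_mul (-b)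
    convert this.exp using 1
    · ext x; simp [div_eq_mul_inv]
    · simp only [Pi.inv_apply, div_eq_mul_inv]
      field_simp
      ring
  refine (hexp.mul (Real.hasDerivAt_rpow_const (p := q + 3) (Or.inl hr.ne'))).congr_deriv ?_
  have h3 : r ^ (q + 3) = r ^ q * r ^ 3 := by
    rw [Real.rpow_add hr, ← Real.rpow_natCast]; norm_num
  have h2 : r ^ (q + 3 - 1) = r ^ (q + 2) := by ring_nf
  rw [h2, h3]
  unfold expNegInvSqMulRpow
  field_simp

lemma integral_recurrence (hb : 0 < b) (hρ : 0 < ρ) :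
    2 * b * (∫ r in (0 : ℝ)..ρ, expNegInvSqMulRpow b q r) +
        (q + 3) * ∫ r in (0 : ℝ)..ρ, expNegInvSqMulRpow b (q + 2) r =
      expNegInvSqMulRpow b (q + 3) ρ := by
  have hI := intervalIntegrable q hb hρ.le
  have hJ := intervalIntegrable (q + 2) hb hρ.le
  rw [← intervalIntegral.integral_const_mul, ← intervalIntegral.integral_const_mul,
    ← intervalIntegral.integral_add (hI.const_mul _) (hJ.const_mul _)]
  have hF := intervalIntegral.integral_eq_sub_of_hasDerivAt_of_le hρ.le
    ((continuousOn_update_zero (q + 3) hb).mono Icc_subset_Ici_self)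
    (fun r hr => (hasDerivAt_add_three q hr.1).congr_of_eventuallyEq
      (eventually_ne_nhds hr.1.ne' |>.mono fun x hx => update_of_ne hx _ _))
    ((hI.const_mul _).add (hJ.const_mul _))
  rw [hF, update_self, update_of_ne hρ.ne', sub_zero]

lemma integral_add_two_le (hb : 0 < b) (hρ : 0 ≤ ρ) :
    ∫ r in (0 : ℝ)..ρ, expNegInvSqMulRpow b (q + 2) r ≤
      ρ ^ 2 * ∫ r in (0 : ℝ)..ρ, expNegInvSqMulRpow b q r := by
  rw [← intervalIntegral.integral_const_mul]
  refine intervalIntegral.integral_mono_on_of_le_Ioo hρ (intervalIntegrable (q + 2) hb hρ)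
    ((intervalIntegrable q hb hρ).const_mul _) fun r hr => ?_
  have hsq : r ^ 2 ≤ ρ ^ 2 := pow_le_pow_left₀ hr.1.le hr.2.le 2
  calc expNegInvSqMulRpow b (q + 2) r = r ^ 2 * expNegInvSqMulRpow b q r := by
        rw [expNegInvSqMulRpow, expNegInvSqMulRpow, Real.rpow_add hr.1, Real.rpow_two]; ring
    _ ≤ ρ ^ 2 * expNegInvSqMulRpow b q r := by gcongr; exact (pos q hr.1).le

lemma integral_pos (hb : 0 < b) (hρ : 0 < ρ) :
    0 < ∫ r in (0 : ℝ)..ρ, expNegInvSqMulRpow b q r :=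
  intervalIntegral.intervalIntegral_pos_of_pos_on (intervalIntegrable q hb hρ.le)
    (fun _ hr => pos q hr.1) hρ

lemma rpow_mul_exp_mul_integral_eq (hb : 0 < b) (hρ : 0 < ρ) :
    ρ ^ (-(q + 3)) * Real.exp (b / ρ ^ 2) * ∫ r in (0 : ℝ)..ρ, expNegInvSqMulRpow b q r =
      (2 * b + (q + 3) * ((∫ r in (0 : ℝ)..ρ, expNegInvSqMulRpow b (q + 2) r) /
        ∫ r in (0 : ℝ)..ρ, expNegInvSqMulRpow b q r))⁻¹ := by
  refine eq_inv_of_mul_eq_one_left ?_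
  have hI := (integral_pos q hb hρ).ne'
  have hexp : Real.exp (b / ρ ^ 2) * Real.exp (-b / ρ ^ 2) = 1 := by
    rw [← Real.exp_add, neg_div, add_neg_cancel, Real.exp_zero]
  have hpow : ρ ^ (-(q + 3)) * ρ ^ (q + 3) = 1 := by
    rw [Real.rpow_neg hρ.le, inv_mul_cancel₀ (Real.rpow_pos_of_pos hρ _).ne']
  have key := integral_recurrence q hb hρ
  rw [expNegInvSqMulRpow] at key
  calc _ = ρ ^ (-(q + 3)) * Real.exp (b / ρ ^ 2) *
        (2 * b * (∫ r in (0 : ℝ)..ρ, expNegInvSqMulRpow b q r) +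
          (q + 3) * ∫ r in (0 : ℝ)..ρ, expNegInvSqMulRpow b (q + 2) r) := by
        field_simp
    _ = (Real.exp (b / ρ ^ 2) * Real.exp (-b / ρ ^ 2)) * (ρ ^ (-(q + 3)) * ρ ^ (q + 3)) := by
        rw [key]; ring
    _ = 1 := by rw [hexp, hpow, one_mul]

theorem tendsto_rpow_mul_exp_mul_integral (hb : 0 < b) :
    Tendsto (fun ρ => ρ ^ (-(q + 3)) * Real.exp (b / ρ ^ 2) *
        ∫ r in (0 : ℝ)..ρ, expNegInvSqMulRpow b q r) (𝓝[>] 0) (𝓝 (2 * b)⁻¹) := by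
  have hratio : Tendsto (fun ρ => (∫ r in (0 : ℝ)..ρ, expNegInvSqMulRpow b (q + 2) r) /
      ∫ r in (0 : ℝ)..ρ, expNegInvSqMulRpow b q r) (𝓝[>] 0) (𝓝 0) := by
    have hsq : Tendsto (fun ρ : ℝ => ρ ^ 2) (𝓝[>] 0) (𝓝 0) := by
      simpa using ((continuous_pow 2).tendsto (0 : ℝ)).mono_left nhdsWithin_le_nhds
    refine squeeze_zero' ?_ ?_ hsq <;> filter_upwards [self_mem_nhdsWithin] with ρ (hρ : 0 < ρ)
    · exact div_nonneg (integral_pos (q + 2) hb hρ).le (integral_pos q hb hρ).le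
    · exact div_le_of_le_mul₀ (integral_pos q hb hρ).le (sq_nonneg ρ)
        (integral_add_two_le q hb hρ.le)
  have hlim := ((hratio.const_mul (q + 3)).const_add (2 * b)).inv₀
    (by rw [mul_zero, add_zero]; positivity)
  rw [mul_zero, add_zero] at hlim
  refine hlim.congr' ?_
  filter_upwards [self_mem_nhdsWithin] with ρ hρ
  exact (rpow_mul_exp_mul_integral_eq q hb hρ).symm

end expNegInvSqMulRpow

theorem stmt_10_general (m : ℕ) :
    Tendsto
      (fun ρ : ℝ => ρ ^ ((4 : ℝ) - m) * Real.exp (2 / ρ ^ 2) *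
        ∫ r in (0 : ℝ)..ρ, Real.exp (-2 / r ^ 2) * r ^ ((m : ℝ) - 7))
      (nhdsWithin 0 (Set.Ioi 0)) (nhds (1 / 4)) := by
  have h := expNegInvSqMulRpow.tendsto_rpow_mul_exp_mul_integral ((m : ℝ) - 7) two_pos
  rw [show -((m : ℝ) - 7 + 3) = 4 - m by ring, show (2 * 2 : ℝ)⁻¹ = 1 / 4 by norm_num] at h
  exact h

/-- For every integer `m ≥ 1`,
`lim_{ρ→0⁺} ρ^{4−m} e^{2/ρ²} ∫₀^ρ e^{−2/r²} r^{m−7} dr = 1/4`. -/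
theorem stmt_10 (m : ℕ) (hm : 1 ≤ m) :
    Tendsto
      (fun ρ : ℝ => ρ ^ ((4 : ℝ) - m) * Real.exp (2 / ρ ^ 2) *
        ∫ r in (0 : ℝ)..ρ, Real.exp (-2 / r ^ 2) * r ^ ((m : ℝ) - 7))
      (nhdsWithin 0 (Set.Ioi 0)) (nhds (1 / 4)) :=
  stmt_10_general m
end

section
/- Let m ≥ 1 and define D(ρ) := ρ^{2−m} ∫₀^ρ ( 4 e^{−2/r²} r^{−6} / √(1 + 4 e^{−2/r²} r^{−6}) ) r^{m−1} dr and H(ρ) := e^{−2/ρ²} / √(1 + 4 e^{−2/ρ²} ρ^{−6}) for ρ ∈ (0,1]. Then H(ρ) > 0 for all ρ > 0 and D(ρ)/H(ρ) → +∞ as ρ → 0⁺. (These are, up to a common factor σ_{m−1}, the intrinsic Dirichlet energy and the intrinsic L² height of the graph of f(x) = e^{−1/|x|²} over the plane ℝ^m × {0}; hence the intrinsic planar frequency of this semicalibrated graph blows up at the origin.) -/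
/-!
Since `exp (-2/r²) ≤ (3/2) r⁸`, the squared gradient `g(r) = 4 e^{-2/r²} r^{-6}` is at most `6 r²`;
so near the origin the energy density `g/√(1+g) · r^{m-1}` is at least `g/2 · r^{m-1}`, while
`H(ρ) ≤ e^{-2/ρ²}`. On the window `[ρ - ρ³/16, ρ]` one has `2/r² ≤ 2/ρ² + 1`, hence
`e^{-2/r²} ≥ e^{-1} e^{-2/ρ²}`; integrating over this window alone gives
`D(ρ) ≥ c e^{-2/ρ²} ρ^{-2}`, so `D/H ≥ c ρ^{-2} → ∞`.
-/

open MeasureTheory Filter Real Set Topology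

noncomputable section

namespace PlanarFrequency

/-- `|∇f|²` at `|x| = r`, for `f(x) = exp (-1/|x|²)`. -/
def gradSq (r : ℝ) : ℝ := 4 * exp (-2 / r ^ 2) * r ^ (-6 : ℝ)

def energyDensity (m r : ℝ) : ℝ := gradSq r / √(1 + gradSq r) * r ^ (m - 1)

def dirichletEnergy (m ρ : ℝ) : ℝ := ρ ^ (2 - m) * ∫ r in (0 : ℝ)..ρ, energyDensity m r

def height (ρ : ℝ) : ℝ := exp (-2 / ρ ^ 2) / √(1 + gradSq ρ)

lemma gradSq_eq (r : ℝ) : gradSq r = 4 * exp (-2 / r ^ 2) / r ^ 6 := by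
  rw [gradSq, show (-6 : ℝ) = ((-6 : ℤ) : ℝ) by norm_num, rpow_intCast, zpow_neg,
    div_eq_mul_inv]
  norm_cast

lemma gradSq_nonneg (r : ℝ) : 0 ≤ gradSq r := by
  rw [gradSq_eq]; positivity

lemma exp_neg_two_div_sq_le {r : ℝ} (hr : r ≠ 0) : exp (-2 / r ^ 2) ≤ 3 / 2 * r ^ 8 := by
  have h := pow_div_factorial_le_exp (x := 2 / r ^ 2) (by positivity) 4
  rw [show (Nat.factorial 4 : ℝ) = 24 by norm_num [Nat.factorial]] at h
  rw [neg_div, exp_neg, inv_le_comm₀ (exp_pos _) (by positivity)]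
  refine (le_of_eq ?_).trans h
  field_simp
  norm_num

lemma gradSq_le {r : ℝ} (hr : r ≠ 0) : gradSq r ≤ 6 * r ^ 2 := by
  rw [gradSq_eq, div_le_iff₀ (by positivity)]
  nlinarith [exp_neg_two_div_sq_le hr]

lemma measurable_energyDensity (m : ℝ) : Measurable (energyDensity m) := by
  unfold energyDensity gradSq
  fun_prop

lemma energyDensity_nonneg (m : ℝ) {r : ℝ} (hr : 0 ≤ r) : 0 ≤ energyDensity m r := by
  have := gradSq_nonneg r
  unfold energyDensity; positivity

lemma energyDensity_le {m r : ℝ} (hm : 1 ≤ m) (hr₀ : 0 < r) (hr₁ : r ≤ 1) :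
    energyDensity m r ≤ 6 := by
  have hg := gradSq_nonneg r
  calc energyDensity m r ≤ gradSq r * 1 :=
        mul_le_mul (div_le_self hg (one_le_sqrt.2 (by linarith)))
          (rpow_le_one hr₀.le hr₁ (by linarith)) (by positivity) hg
    _ ≤ 6 * r ^ 2 := by rw [mul_one]; exact gradSq_le hr₀.ne'
    _ ≤ 6 := by nlinarith

lemma intervalIntegrable_energyDensity {m ρ : ℝ} (hm : 1 ≤ m) (hρ₀ : 0 ≤ ρ) (hρ₁ : ρ ≤ 1) :
    IntervalIntegrable (energyDensity m) volume 0 ρ := by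
  rw [intervalIntegrable_iff_integrableOn_Ioc_of_le hρ₀]
  refine Measure.integrableOn_of_bounded (M := 6) measure_Ioc_lt_top.ne
    (measurable_energyDensity m).aestronglyMeasurable ?_
  refine (ae_restrict_iff' measurableSet_Ioc).2 (ae_of_all _ fun r hr => ?_)
  rw [Real.norm_of_nonneg (energyDensity_nonneg m hr.1.le)]
  exact energyDensity_le hm hr.1 (hr.2.trans hρ₁)

lemma half_gradSq_mul_le_energyDensity {m r : ℝ} (hr : 0 < r) (hg : gradSq r ≤ 3) :
    gradSq r / 2 * r ^ (m - 1) ≤ energyDensity m r := by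
  have hg₀ := gradSq_nonneg r
  have hsqrt : √(1 + gradSq r) ≤ 2 := by
    rw [sqrt_le_left (by norm_num)]; linarith
  unfold energyDensity
  gcongr

lemma height_pos (ρ : ℝ) : 0 < height ρ := by
  have := gradSq_nonneg ρ
  unfold height; positivity

lemma height_le (ρ : ℝ) : height ρ ≤ exp (-2 / ρ ^ 2) :=
  div_le_self (exp_pos _).le (one_le_sqrt.2 (by linarith [gradSq_nonneg ρ]))

lemma half_le_sub_cube_div {ρ : ℝ} (hρ₀ : 0 ≤ ρ) (hρ₁ : ρ ≤ 1) : ρ / 2 ≤ ρ - ρ ^ 3 / 16 := by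
  nlinarith [mul_le_mul_of_nonneg_left (pow_le_one₀ hρ₀ hρ₁ (n := 2)) hρ₀]

lemma exp_neg_one_mul_le_exp_window {ρ : ℝ} (hρ₀ : 0 < ρ) (hρ₁ : ρ ≤ 1) :
    exp (-1) * exp (-2 / ρ ^ 2) ≤ exp (-2 / (ρ - ρ ^ 3 / 16) ^ 2) := by
  have hs : 0 < 1 - ρ ^ 2 / 16 := by nlinarith
  have ha : ρ - ρ ^ 3 / 16 = ρ * (1 - ρ ^ 2 / 16) := by ring
  rw [← exp_add, exp_le_exp, ha]
  suffices 2 / (ρ * (1 - ρ ^ 2 / 16)) ^ 2 ≤ 2 / ρ ^ 2 + 1 by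
    simp only [neg_div] at this ⊢; linarith
  have hexpand : (2 / ρ ^ 2 + 1) * (ρ * (1 - ρ ^ 2 / 16)) ^ 2
      = (2 + ρ ^ 2) * (1 - ρ ^ 2 / 16) ^ 2 := by
    field_simp
  rw [div_le_iff₀ (by positivity), hexpand]
  have ht : ρ ^ 2 ≤ 1 := pow_le_one₀ hρ₀.le hρ₁
  nlinarith [mul_le_mul_of_nonneg_left ht (sq_nonneg ρ), pow_pos hρ₀ 6]

lemma energyDensity_ge_on_window {m ρ r : ℝ} (hm : 1 ≤ m) (hρ₀ : 0 < ρ) (hρ₁ : ρ ≤ 1 / 2)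
    (hr : r ∈ Icc (ρ - ρ ^ 3 / 16) ρ) :
    2 * (exp (-1) * exp (-2 / ρ ^ 2)) / ρ ^ 6 * (ρ / 2) ^ (m - 1) ≤ energyDensity m r := by
  have hhalf := half_le_sub_cube_div hρ₀.le (by linarith)
  have hr₀ : 0 < r := by linarith [hr.1]
  have hg : gradSq r ≤ 3 := by nlinarith [gradSq_le hr₀.ne', hr.2]
  have hexp : exp (-1) * exp (-2 / ρ ^ 2) ≤ exp (-2 / r ^ 2) := by
    refine (exp_neg_one_mul_le_exp_window hρ₀ (by linarith)).trans (exp_le_exp.2 ?_)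
    simp only [neg_div, neg_le_neg_iff]
    exact div_le_div_of_nonneg_left zero_le_two (by nlinarith)
      (pow_le_pow_left₀ (by linarith) hr.1 2)
  calc 2 * (exp (-1) * exp (-2 / ρ ^ 2)) / ρ ^ 6 * (ρ / 2) ^ (m - 1)
      ≤ 2 * exp (-2 / r ^ 2) / r ^ 6 * r ^ (m - 1) := by
        gcongr
        · exact hr.2
        · linarith [hr.1]
    _ = gradSq r / 2 * r ^ (m - 1) := by rw [gradSq_eq]; ring
    _ ≤ energyDensity m r := half_gradSq_mul_le_energyDensity hr₀ hg

lemma rpow_two_sub_mul_half_rpow_sub_one (m : ℝ) {ρ : ℝ} (hρ : 0 < ρ) :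
    ρ ^ (2 - m) * (ρ / 2) ^ (m - 1) = ρ / 2 ^ (m - 1) := by
  rw [div_rpow hρ.le zero_le_two, ← mul_div_assoc, ← rpow_add hρ]
  norm_num

lemma dirichletEnergy_ge {m ρ : ℝ} (hm : 1 ≤ m) (hρ₀ : 0 < ρ) (hρ₁ : ρ ≤ 1 / 2) :
    exp (-1) / (8 * 2 ^ (m - 1)) * exp (-2 / ρ ^ 2) / ρ ^ 2 ≤ dirichletEnergy m ρ := by
  set a := ρ - ρ ^ 3 / 16
  set c := 2 * (exp (-1) * exp (-2 / ρ ^ 2)) / ρ ^ 6 * (ρ / 2) ^ (m - 1)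
  have ha : ρ / 2 ≤ a := half_le_sub_cube_div hρ₀.le (by linarith)
  have ha₀ : 0 ≤ a := by linarith
  have haρ : a ≤ ρ := by simp only [a]; linarith [pow_pos hρ₀ 3]
  have hint := intervalIntegrable_energyDensity hm hρ₀.le (by linarith)
  have hwindow : ρ ^ 3 / 16 * c ≤ ∫ r in a..ρ, energyDensity m r :=
    calc ρ ^ 3 / 16 * c = ∫ _ in a..ρ, c := by simp [a]
      _ ≤ ∫ r in a..ρ, energyDensity m r :=
        intervalIntegral.integral_mono_on haρ intervalIntegrable_const
          (hint.mono_set (uIcc_subset_uIcc (by simp [ha₀, haρ, hρ₀.le]) right_mem_uIcc))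
          fun r hr => energyDensity_ge_on_window hm hρ₀ hρ₁ hr
  have hwhole : ∫ r in a..ρ, energyDensity m r ≤ ∫ r in (0 : ℝ)..ρ, energyDensity m r :=
    intervalIntegral.integral_mono_interval ha₀ haρ le_rfl
      ((ae_restrict_iff' measurableSet_Ioc).2 (ae_of_all _ fun r hr =>
        energyDensity_nonneg m hr.1.le)) hint
  calc exp (-1) / (8 * 2 ^ (m - 1)) * exp (-2 / ρ ^ 2) / ρ ^ 2
      = ρ ^ (2 - m) * (ρ ^ 3 / 16 * c) := by
        rw [show ρ ^ (2 - m) * (ρ ^ 3 / 16 * c) = ρ ^ (2 - m) * (ρ / 2) ^ (m - 1) *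
          (ρ ^ 3 / 16 * (2 * (exp (-1) * exp (-2 / ρ ^ 2)) / ρ ^ 6)) by ring,
          rpow_two_sub_mul_half_rpow_sub_one m hρ₀]
        field_simp
        ring
    _ ≤ dirichletEnergy m ρ := by
        unfold dirichletEnergy
        gcongr
        exact hwindow.trans hwhole

lemma frequency_ge {m ρ : ℝ} (hm : 1 ≤ m) (hρ₀ : 0 < ρ) (hρ₁ : ρ ≤ 1 / 2) :
    exp (-1) / (8 * 2 ^ (m - 1)) / ρ ^ 2 ≤ dirichletEnergy m ρ / height ρ := by
  rw [le_div_iff₀ (height_pos ρ)]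
  calc exp (-1) / (8 * 2 ^ (m - 1)) / ρ ^ 2 * height ρ
      ≤ exp (-1) / (8 * 2 ^ (m - 1)) / ρ ^ 2 * exp (-2 / ρ ^ 2) := by
        gcongr; exact height_le ρ
    _ = exp (-1) / (8 * 2 ^ (m - 1)) * exp (-2 / ρ ^ 2) / ρ ^ 2 := by ring
    _ ≤ dirichletEnergy m ρ := dirichletEnergy_ge hm hρ₀ hρ₁

theorem tendsto_frequency {m : ℝ} (hm : 1 ≤ m) :
    Tendsto (fun ρ => dirichletEnergy m ρ / height ρ) (𝓝[>] 0) atTop := by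
  have hinvSq : Tendsto (fun ρ : ℝ => ρ⁻¹ * ρ⁻¹) (𝓝[>] 0) atTop :=
    tendsto_inv_nhdsGT_zero.atTop_mul_atTop₀ tendsto_inv_nhdsGT_zero
  refine tendsto_atTop_mono' _ ?_ (hinvSq.const_mul_atTop (r := exp (-1) / (8 * 2 ^ (m - 1)))
    (by positivity))
  filter_upwards [Ioo_mem_nhdsGT (show (0 : ℝ) < 1 / 2 by norm_num)] with ρ hρ
  rw [← mul_inv, ← sq, ← div_eq_mul_inv]
  exact frequency_ge hm hρ.1 hρ.2.le

end PlanarFrequency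

open PlanarFrequency in
/-- With `D(ρ) = ρ^{2−m} ∫₀^ρ (4e^{−2/r²}r^{−6}/√(1+4e^{−2/r²}r^{−6})) r^{m−1} dr`
(the intrinsic Dirichlet energy) and `H(ρ) = e^{−2/ρ²}/√(1+4e^{−2/ρ²}ρ^{−6})`
(the intrinsic `L²` height) of the graph of `f(x) = e^{−1/|x|²}`, one has `H(ρ) > 0`
for all `ρ > 0` and the planar frequency `D(ρ)/H(ρ)` blows up as `ρ → 0⁺`. -/
theorem stmt_11 (m : ℕ) (hm : 1 ≤ m) (D H : ℝ → ℝ)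
    (hD : ∀ ρ : ℝ, D ρ = ρ ^ ((2 : ℝ) - m) *
      ∫ r in (0 : ℝ)..ρ,
        (4 * Real.exp (-2 / r ^ 2) * r ^ ((-6 : ℝ)) /
          Real.sqrt (1 + 4 * Real.exp (-2 / r ^ 2) * r ^ ((-6 : ℝ)))) * r ^ ((m : ℝ) - 1))
    (hH : ∀ ρ : ℝ, H ρ =
      Real.exp (-2 / ρ ^ 2) / Real.sqrt (1 + 4 * Real.exp (-2 / ρ ^ 2) * ρ ^ ((-6 : ℝ)))) :
    (∀ ρ : ℝ, 0 < ρ → 0 < H ρ) ∧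
      Tendsto (fun ρ => D ρ / H ρ) (nhdsWithin 0 (Set.Ioi 0)) atTop := by
  obtain rfl : D = dirichletEnergy m := funext hD
  obtain rfl : H = height := funext hH
  exact ⟨fun ρ _ => height_pos ρ, tendsto_frequency (by exact_mod_cast hm)⟩
end
end
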